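/- arXiv:2205.10836 — 2 statements merged into one kernel-verified Lean document; each statement's English description precedes it below -/
import Mathlib

section
/- For every fair-goods instance with n agents, there exists a connected PROP1 allocation A with utilitarian welfare UW(A) >= 1/2. Consequently, since UW of any allocation is at most n under normalized valuations, the price of PROP1 with respect to utilitarian welfare for goods is at most 2n. -/
open Finset

noncomputable section

/-- The value of a bundle `S` of items under additive (item-level) valuation `v`. -/
def bundleVal {m : ℕ} (v : Fin m → ℝ) (S : Finset (Fin m)) : ℝ := ∑ e ∈ S, v e

/-- A bundle is connected if it is an interval of the line `e_1, …, e_m`. -/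
def IsConnBundle {m : ℕ} (S : Finset (Fin m)) : Prop :=
  ∀ a ∈ S, ∀ c ∈ S, ∀ b : Fin m, a ≤ b → b ≤ c → b ∈ S

/-- A connected allocation: pairwise disjoint connected bundles covering all items. -/
def ConnAlloc (n m : ℕ) (A : Fin n → Finset (Fin m)) : Prop :=
  (∀ i, IsConnBundle (A i)) ∧
  (∀ i j : Fin n, i ≠ j → Disjoint (A i) (A j)) ∧
  (∀ e : Fin m, ∃ i, e ∈ A i)

/-- The maximin share of an agent with valuation `v`: the maximum over connected
`n`-partitions of the minimum bundle value. -/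
def mmsVal (n m : ℕ) (v : Fin m → ℝ) : ℝ :=
  sSup { x : ℝ | ∃ A : Fin n → Finset (Fin m), ConnAlloc n m A ∧ x = ⨅ j, bundleVal v (A j) }

/-- Utilitarian welfare of an allocation. -/
def utilW (n m : ℕ) (v : Fin n → Fin m → ℝ) (A : Fin n → Finset (Fin m)) : ℝ :=
  ∑ i, bundleVal (v i) (A i)

/-- Egalitarian welfare of an allocation. -/
def egalW (n m : ℕ) (v : Fin n → Fin m → ℝ) (A : Fin n → Finset (Fin m)) : ℝ :=
  ⨅ i, bundleVal (v i) (A i)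

/-- Optimal utilitarian welfare over all connected allocations. -/
def optU (n m : ℕ) (v : Fin n → Fin m → ℝ) : ℝ :=
  sSup { x : ℝ | ∃ A, ConnAlloc n m A ∧ x = utilW n m v A }

/-- Optimal egalitarian welfare over all connected allocations. -/
def optE (n m : ℕ) (v : Fin n → Fin m → ℝ) : ℝ :=
  sSup { x : ℝ | ∃ A, ConnAlloc n m A ∧ x = egalW n m v A }

/-- A connected allocation of goods is PROP1 if every agent either already has value at
least `1/n`, or gets value at least `1/n` after adding one item keeping connectivity. -/
def Prop1Goods (n m : ℕ) (v : Fin n → Fin m → ℝ) (A : Fin n → Finset (Fin m)) : Prop :=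
  ∀ i, (1 / (n : ℝ)) ≤ bundleVal (v i) (A i) ∨
    ∃ e : Fin m, e ∉ A i ∧ IsConnBundle (insert e (A i)) ∧
      (1 / (n : ℝ)) ≤ bundleVal (v i) (insert e (A i))


/-!
Agents who value some single item at least `1/n` satisfy PROP1 with an empty bundle, so only
the remaining agents `H` need to be served. A moving knife run over `H` from left to right stops
at the first item `b` at which some agent still in the game values the items from the knife's
start through `b` at `1/n`; that agent leaves with the piece before `b`, and the last agent keeps
the rest. Moving every inner cut one item to the right gives a second PROP1 allocation, in which
each piece gains the item at its knife stop and, except the first, loses its first item. Over the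
two allocations every agent of `H` collects at least `1/n`, and the last one at least
`2 (1 - (|H| - 1)/n) - 1/n`, because no single item is worth `1/n` to it; so the two welfares add
up to at least `2 - |H|/n ≥ 1`.
-/

open Function

def itemIco (m a b : ℕ) : Finset (Fin m) :=
  univ.filter fun e => a ≤ (e : ℕ) ∧ (e : ℕ) < b

section Items

variable {m a a' b b' : ℕ}

@[simp]
lemma mem_itemIco {e : Fin m} : e ∈ itemIco m a b ↔ a ≤ (e : ℕ) ∧ (e : ℕ) < b := by
  simp [itemIco]

lemma isConnBundle_itemIco : IsConnBundle (itemIco m a b) := by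
  intro x hx y hy z hxz hzy
  rw [mem_itemIco] at *
  exact ⟨hx.1.trans hxz, lt_of_le_of_lt hzy hy.2⟩

lemma itemIco_zero_of_le (h : m ≤ b) : itemIco m 0 b = univ := by
  ext e; simp only [mem_itemIco, mem_univ, iff_true]; omega

lemma itemIco_of_le_right (h : m ≤ b) : itemIco m a b = itemIco m a m := by
  ext e; simp only [mem_itemIco]; omega

lemma itemIco_self_succ (ha : a < m) : itemIco m a (a + 1) = {⟨a, ha⟩} := by
  ext e; simp only [mem_itemIco, mem_singleton, Fin.ext_iff]; omega

lemma insert_itemIco_succ_left (ha : a < m) (hab : a < b) :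
    insert ⟨a, ha⟩ (itemIco m (a + 1) b) = itemIco m a b := by
  ext e; simp only [mem_insert, mem_itemIco, Fin.ext_iff]; omega

lemma insert_itemIco_right (hb : b < m) (hab : a ≤ b) :
    insert ⟨b, hb⟩ (itemIco m a b) = itemIco m a (b + 1) := by
  ext e; simp only [mem_insert, mem_itemIco, Fin.ext_iff]; omega

lemma itemIco_subset_itemIco (ha : a ≤ a') (hb : b' ≤ b) : itemIco m a' b' ⊆ itemIco m a b := by
  intro e; simp only [mem_itemIco]; omega

lemma itemIco_union_itemIco (ha : a ≤ a') (hab : a' ≤ b) (hb : b ≤ b') :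
    itemIco m a b ∪ itemIco m a' b' = itemIco m a b' := by
  ext e; simp only [mem_union, mem_itemIco]; omega

variable {v : Fin m → ℝ}

lemma bundleVal_mono (hv : ∀ e, 0 ≤ v e) {S T : Finset (Fin m)} (h : S ⊆ T) :
    bundleVal v S ≤ bundleVal v T :=
  sum_le_sum_of_subset_of_nonneg h fun e _ _ => hv e

lemma bundleVal_union_le (hv : ∀ e, 0 ≤ v e) (S T : Finset (Fin m)) :
    bundleVal v (S ∪ T) ≤ bundleVal v S + bundleVal v T := by
  classical
  have := sum_union_inter (s₁ := S) (s₂ := T) (f := v)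
  have := bundleVal_mono hv (empty_subset (S ∩ T))
  simp only [bundleVal, sum_empty] at *
  linarith

lemma bundleVal_itemIco_add (hab : a ≤ b) (hbb' : b ≤ b') :
    bundleVal v (itemIco m a b) + bundleVal v (itemIco m b b') = bundleVal v (itemIco m a b') := by
  classical
  rw [bundleVal, bundleVal, ← sum_union, itemIco_union_itemIco hab le_rfl hbb']
  · rfl
  · rw [disjoint_left]; intro e; simp only [mem_itemIco]; omega

lemma bundleVal_itemIco_le_add (hv : ∀ e, 0 ≤ v e) (ha : a < m) (hab : a < b) (ha' : a' ≤ a + 1)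
    (hb : b ≤ b') : bundleVal v (itemIco m a b) ≤ v ⟨a, ha⟩ + bundleVal v (itemIco m a' b') := by
  rw [← insert_itemIco_succ_left ha hab, bundleVal, sum_insert (by simp)]
  exact add_le_add_right (bundleVal_mono hv (itemIco_subset_itemIco ha' hb)) _

end Items

section Prop1

variable {m a a' b : ℕ} {v : Fin m → ℝ} {τ : ℝ}

def IsProp1Bundle (v : Fin m → ℝ) (τ : ℝ) (S : Finset (Fin m)) : Prop :=
  τ ≤ bundleVal v S ∨ ∃ e ∉ S, IsConnBundle (insert e S) ∧ τ ≤ bundleVal v (insert e S)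

lemma IsProp1Bundle.of_insert_eq_itemIco {S : Finset (Fin m)} {e : Fin m}
    (h : insert e S = itemIco m a b) (hτ : τ ≤ bundleVal v (itemIco m a b)) :
    IsProp1Bundle v τ S := by
  by_cases he : e ∈ S
  · left; rwa [← insert_eq_of_mem he, h]
  · right; exact ⟨e, he, h ▸ isConnBundle_itemIco, h ▸ hτ⟩

lemma isProp1Bundle_empty {e : Fin m} (he : τ ≤ v e) : IsProp1Bundle v τ ∅ :=
  .of_insert_eq_itemIco (itemIco_self_succ e.isLt).symm <| by
    simpa [itemIco_self_succ e.isLt, bundleVal] using he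

lemma isProp1Bundle_itemIco_of_succ_right (hab : a ≤ b)
    (hτ : τ ≤ bundleVal v (itemIco m a (b + 1))) : IsProp1Bundle v τ (itemIco m a b) := by
  by_cases hb : b < m
  · exact .of_insert_eq_itemIco (insert_itemIco_right hb hab) hτ
  · left
    rwa [itemIco_of_le_right (b := b + 1) (by omega),
      ← itemIco_of_le_right (b := b) (by omega)] at hτ

lemma isProp1Bundle_itemIco_of_succ_left (ha : a < m) (hab : a < b) (ha₁ : a ≤ a')
    (ha₂ : a' ≤ a + 1) (hτ : τ ≤ bundleVal v (itemIco m a b)) :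
    IsProp1Bundle v τ (itemIco m a' b) := by
  obtain rfl | rfl : a' = a ∨ a' = a + 1 := by omega
  · exact .inl hτ
  · exact .of_insert_eq_itemIco (insert_itemIco_succ_left ha hab) hτ

end Prop1

lemma exists_cut_index {c : ℕ → ℕ} (hc : Monotone c) {x : ℕ} (h₀ : c 0 ≤ x) :
    ∀ {k : ℕ}, x < c k → ∃ t < k, c t ≤ x ∧ x < c (t + 1)
  | 0, hk => absurd h₀ (not_le.2 hk)
  | k + 1, hk => by
    by_cases hx : x < c k
    · obtain ⟨t, htk, ht⟩ := exists_cut_index hc h₀ hx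
      exact ⟨t, htk.trans k.lt_succ_self, ht⟩
    · exact ⟨k, k.lt_succ_self, not_lt.1 hx, hk⟩

lemma cut_index_unique {c : ℕ → ℕ} (hc : Monotone c) {x t t' : ℕ} (ht : c t ≤ x ∧ x < c (t + 1))
    (ht' : c t' ≤ x ∧ x < c (t' + 1)) : t = t' := by
  by_contra hne
  rcases Nat.lt_or_gt_of_ne hne with h | h
  · exact absurd (ht'.1.trans_lt ht.2) (not_lt.2 (hc h))
  · exact absurd (ht.1.trans_lt ht'.2) (not_lt.2 (hc h))

section CutAlloc

variable {ι : Type*} [DecidableEq ι] {m k : ℕ}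

def cutAlloc (m : ℕ) (σ : Fin k → ι) (c : ℕ → ℕ) (i : ι) : Finset (Fin m) :=
  univ.filter fun e => ∃ t, σ t = i ∧ c t ≤ (e : ℕ) ∧ (e : ℕ) < c ((t : ℕ) + 1)

variable {σ : Fin k → ι} {c : ℕ → ℕ}

lemma cutAlloc_apply (hσ : Injective σ) (t : Fin k) :
    cutAlloc m σ c (σ t) = itemIco m (c t) (c ((t : ℕ) + 1)) := by
  ext e; simp [cutAlloc, hσ.eq_iff]

lemma cutAlloc_of_notMem_range {i : ι} (hi : i ∉ Set.range σ) : cutAlloc m σ c i = ∅ := by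
  ext e; simp only [cutAlloc, mem_filter, mem_univ, true_and, notMem_empty, iff_false]
  rintro ⟨t, rfl, -⟩
  exact hi ⟨t, rfl⟩

lemma connAlloc_cutAlloc {n : ℕ} {σ : Fin k → Fin n} (hσ : Injective σ) (hc : Monotone c)
    (h₀ : c 0 = 0) (hk : m ≤ c k) : ConnAlloc n m (cutAlloc m σ c) := by
  refine ⟨fun i => ?_, fun i j hij => ?_, fun e => ?_⟩
  · by_cases hi : i ∈ Set.range σ
    · obtain ⟨t, rfl⟩ := hi
      rw [cutAlloc_apply hσ]
      exact isConnBundle_itemIco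
    · rw [cutAlloc_of_notMem_range hi]
      intro a ha
      simp at ha
  · rw [disjoint_left]
    simp only [cutAlloc, mem_filter, mem_univ, true_and]
    rintro e ⟨t, rfl, ht⟩ ⟨t', rfl, ht'⟩
    exact hij (congrArg σ (Fin.ext (cut_index_unique hc ht ht')))
  · obtain ⟨t, htk, ht⟩ := exists_cut_index hc (h₀.trans_le (Nat.zero_le e)) (e.isLt.trans_le hk)
    exact ⟨σ ⟨t, htk⟩, by simpa [cutAlloc] using ⟨⟨t, htk⟩, rfl, ht⟩⟩

lemma utilW_cutAlloc {n : ℕ} (v : Fin n → Fin m → ℝ) {σ : Fin k → Fin n} (hσ : Injective σ) :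
    utilW n m v (cutAlloc m σ c) =
      ∑ t, bundleVal (v (σ t)) (itemIco m (c t) (c ((t : ℕ) + 1))) := by
  refine (Fintype.sum_of_injective σ hσ _ _ (fun i hi => ?_) (fun t => ?_)).symm
  · simp [cutAlloc_of_notMem_range hi, bundleVal]
  · rw [cutAlloc_apply hσ]

lemma prop1Goods_cutAlloc {n : ℕ} {v : Fin n → Fin m → ℝ} {σ : Fin k → Fin n} (hσ : Injective σ)
    (hout : ∀ i ∉ Set.range σ, ∃ e, 1 / (n : ℝ) ≤ v i e)
    (hin : ∀ t, IsProp1Bundle (v (σ t)) (1 / n) (itemIco m (c t) (c ((t : ℕ) + 1)))) :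
    Prop1Goods n m v (cutAlloc m σ c) := by
  intro i
  by_cases hi : i ∈ Set.range σ
  · obtain ⟨t, rfl⟩ := hi
    rw [cutAlloc_apply hσ]
    exact hin t
  · obtain ⟨e, he⟩ := hout i hi
    rw [cutAlloc_of_notMem_range hi]
    exact isProp1Bundle_empty he

end CutAlloc

section Knife

variable {ι : Type*} {m : ℕ}

/-- A moving-knife pass over the agents `R` started at item `l`: `σ t` is the `t`-th agent to
leave, with the piece `c t ≤ e < c (t + 1)`. -/
structure IsKnifeCut (v : ι → Fin m → ℝ) (τ X : ℝ) (R : Finset ι) (l : ℕ)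
    {s : ℕ} (σ : Fin (s + 1) → ι) (c : ℕ → ℕ) : Prop where
  injective : Injective σ
  range_eq : Set.range σ = R
  monotone : Monotone c
  zero : c 0 = l
  last : c (s + 1) = m
  lt_succ : ∀ t : Fin (s + 1), c t < c ((t : ℕ) + 1)
  le_succ : ∀ t : Fin (s + 1), τ ≤ bundleVal (v (σ t)) (itemIco m (c t) (c ((t : ℕ) + 1) + 1))
  le_last : X ≤ bundleVal (v (σ (Fin.last s))) (itemIco m (c s) m)

variable {v : ι → Fin m → ℝ} {τ X : ℝ}

lemma IsKnifeCut.mem {R : Finset ι} {l s : ℕ} {σ : Fin (s + 1) → ι} {c : ℕ → ℕ}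
    (h : IsKnifeCut v τ X R l σ c) (t : Fin (s + 1)) : σ t ∈ R :=
  mem_coe.1 (h.range_eq ▸ Set.mem_range_self t)

lemma exists_isKnifeCut_singleton (hX : τ ≤ X) {w : ι} {l : ℕ} (hl : l < m)
    (hw : X ≤ bundleVal (v w) (itemIco m l m)) :
    ∃ σ c, IsKnifeCut (s := 0) v τ X {w} l σ c := by
  refine ⟨fun _ => w, fun t => if t = 0 then l else m,
    ⟨fun a b _ => Subsingleton.elim (α := Fin 1) a b, by simp, fun a b hab => ?_, rfl, rfl,
      fun t => ?_, fun t => ?_, hw⟩⟩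
  · split_ifs <;> omega
  · simpa [Fin.fin_one_eq_zero t] using hl
  · simpa [Fin.fin_one_eq_zero t, itemIco_of_le_right (Nat.le_succ m)] using hX.trans hw

lemma exists_knife_stop (hv : ∀ i e, 0 ≤ v i e) {R : Finset ι} {l : ℕ} (hl : l < m)
    (hsmall : ∀ j ∈ R, ∀ e, v j e < τ) (hR : ∃ j ∈ R, τ ≤ bundleVal (v j) (itemIco m l m)) :
    ∃ b, l < b ∧ b < m ∧ (∃ w ∈ R, τ ≤ bundleVal (v w) (itemIco m l (b + 1))) ∧
      ∀ j ∈ R, bundleVal (v j) (itemIco m l b) < τ := by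
  have hlast : ∃ j ∈ R, τ ≤ bundleVal (v j) (itemIco m l (m - 1 + 1)) := by
    rwa [Nat.sub_add_cancel (by omega)]
  have hP : ∃ b, ∃ j ∈ R, τ ≤ bundleVal (v j) (itemIco m l (b + 1)) := ⟨m - 1, hlast⟩
  obtain ⟨w, hwR, hw⟩ := Nat.find_spec hP
  have hlb : l < Nat.find hP := by
    by_contra! h
    have : bundleVal (v w) (itemIco m l (Nat.find hP + 1)) ≤ v w ⟨l, hl⟩ := by
      simpa [bundleVal, itemIco_self_succ hl] using bundleVal_mono (hv w)
        (itemIco_subset_itemIco (le_refl l) (show Nat.find hP + 1 ≤ l + 1 by omega))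
    linarith [hsmall w hwR ⟨l, hl⟩]
  refine ⟨Nat.find hP, hlb, (Nat.find_min' hP hlast).trans_lt (by omega), ⟨w, hwR, hw⟩,
    fun j hj => ?_⟩
  have := Nat.find_min hP (show Nat.find hP - 1 < Nat.find hP by omega)
  simp only [not_exists, not_and, not_le] at this
  simpa [Nat.sub_add_cancel (show 1 ≤ Nat.find hP by omega)] using this j hj

variable [DecidableEq ι]

/-- The agent `w` at which the knife stops leaves, and every other agent valued the piece at less
than `τ`, so the invariant passes to `R.erase w` with the knife restarted at the stop. -/
lemma exists_isKnifeCut (hv : ∀ i e, 0 ≤ v i e) (hX : τ ≤ X) :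
    ∀ (s : ℕ) (R : Finset ι) (l : ℕ), R.card = s + 1 → l < m → (∀ j ∈ R, ∀ e, v j e < τ) →
      (∀ j ∈ R, s * τ + X ≤ bundleVal (v j) (itemIco m l m)) →
      ∃ (σ : Fin (s + 1) → ι) (c : ℕ → ℕ), IsKnifeCut v τ X R l σ c
  | 0, R, l, hR, hl, _, hinv => by
    obtain ⟨w, rfl⟩ := card_eq_one.1 hR
    exact exists_isKnifeCut_singleton hX hl (by simpa using hinv w (mem_singleton_self w))
  | s + 1, R, l, hR, hl, hsmall, hinv => by
    obtain ⟨j₀, hj₀⟩ : R.Nonempty := card_pos.1 (by omega)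
    have hτ : 0 < τ := (hv j₀ ⟨l, hl⟩).trans_lt (hsmall j₀ hj₀ _)
    obtain ⟨b, hlb, hbm, ⟨w, hwR, hw⟩, hbefore⟩ := exists_knife_stop hv hl hsmall
      ⟨j₀, hj₀, by have := hinv j₀ hj₀; push_cast at this; nlinarith⟩
    have hrest : ∀ j ∈ R.erase w, s * τ + X ≤ bundleVal (v j) (itemIco m b m) := by
      intro j hj
      have hjR := mem_of_mem_erase hj
      have := hinv j hjR
      rw [← bundleVal_itemIco_add hlb.le hbm.le] at this
      push_cast at this
      linarith [hbefore j hjR]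
    obtain ⟨σ, c, hσc⟩ := exists_isKnifeCut hv hX s (R.erase w) b
      (by rw [card_erase_of_mem hwR, hR]; rfl) hbm
      (fun j hj => hsmall j (mem_of_mem_erase hj)) hrest
    refine ⟨Fin.cons w σ, fun t => if t = 0 then l else c (t - 1), ⟨?_, ?_, ?_, ?_, ?_, ?_, ?_, ?_⟩⟩
    · refine Fin.cons_injective_of_injective ?_ hσc.injective
      simp [hσc.range_eq]
    · rw [Fin.range_cons, hσc.range_eq, ← coe_insert, insert_erase hwR]
    · intro t t' htt'
      have := hσc.zero ▸ hσc.monotone (Nat.zero_le (t' - 1))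
      have := hσc.monotone (Nat.sub_le_sub_right htt' 1)
      dsimp only
      split_ifs <;> omega
    · simp
    · simpa using hσc.last
    · refine Fin.forall_fin_succ.2 ⟨by simpa [hσc.zero] using hlb, fun t => ?_⟩
      simpa using hσc.lt_succ t
    · refine Fin.forall_fin_succ.2 ⟨by simpa [hσc.zero] using hw, fun t => ?_⟩
      simpa using hσc.le_succ t
    · simpa [← Fin.succ_last] using hσc.le_last

end Knife

section Shift

def shiftCuts (c : ℕ → ℕ) (t : ℕ) : ℕ := if t = 0 then 0 else c t + 1

variable {c : ℕ → ℕ}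

lemma shiftCuts_succ (t : ℕ) : shiftCuts c (t + 1) = c (t + 1) + 1 := if_neg t.succ_ne_zero

lemma monotone_shiftCuts (hc : Monotone c) : Monotone (shiftCuts c) := by
  intro a b hab
  have := hc hab
  unfold shiftCuts
  split_ifs <;> omega

lemma le_shiftCuts (h₀ : c 0 = 0) (t : ℕ) : c t ≤ shiftCuts c t := by
  unfold shiftCuts; split_ifs with ht <;> simp [ht, h₀]

lemma shiftCuts_le_succ (t : ℕ) : shiftCuts c t ≤ c t + 1 := by
  unfold shiftCuts; split_ifs <;> omega

lemma shiftCuts_le_of_lt {t : ℕ} (ht : c t < c (t + 1)) : shiftCuts c t ≤ c (t + 1) := by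
  unfold shiftCuts; split_ifs <;> omega

end Shift

namespace IsKnifeCut

variable {n m s : ℕ} {v : Fin n → Fin m → ℝ} {τ X : ℝ} {R : Finset (Fin n)} {l : ℕ}
  {σ : Fin (s + 1) → Fin n} {c : ℕ → ℕ}

lemma cut_lt (h : IsKnifeCut v τ X R l σ c) (t : Fin (s + 1)) : c t < m :=
  (h.lt_succ t).trans_le (h.last ▸ h.monotone (by omega))

lemma le_utilW (h : IsKnifeCut v τ X R l σ c) (hv : ∀ i e, 0 ≤ v i e) :
    X ≤ utilW n m v (cutAlloc m σ c) := by
  rw [utilW_cutAlloc v h.injective]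
  calc X ≤ bundleVal (v (σ (Fin.last s)))
        (itemIco m (c (Fin.last s)) (c ((Fin.last s : ℕ) + 1))) := by simpa [h.last] using h.le_last
    _ ≤ ∑ t, bundleVal (v (σ t)) (itemIco m (c t) (c ((t : ℕ) + 1))) :=
        single_le_sum (f := fun t => bundleVal (v (σ t)) (itemIco m (c t) (c ((t : ℕ) + 1))))
          (fun t _ => sum_nonneg fun e _ => hv (σ t) e) (mem_univ _)

lemma connAlloc (h : IsKnifeCut v τ X R 0 σ c) : ConnAlloc n m (cutAlloc m σ c) :=
  connAlloc_cutAlloc h.injective h.monotone h.zero h.last.ge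

lemma connAlloc_shift (h : IsKnifeCut v τ X R 0 σ c) :
    ConnAlloc n m (cutAlloc m σ (shiftCuts c)) :=
  connAlloc_cutAlloc h.injective (monotone_shiftCuts h.monotone) rfl
    (by rw [shiftCuts_succ, h.last]; omega)

lemma prop1Goods (h : IsKnifeCut v (1 / n) X R l σ c) (hout : ∀ i ∉ R, ∃ e, 1 / (n : ℝ) ≤ v i e) :
    Prop1Goods n m v (cutAlloc m σ c) :=
  prop1Goods_cutAlloc h.injective (fun i hi => hout i (by rwa [← mem_coe, ← h.range_eq]))
    fun t => isProp1Bundle_itemIco_of_succ_right (h.lt_succ t).le (h.le_succ t)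

lemma prop1Goods_shift (h : IsKnifeCut v (1 / n) X R 0 σ c)
    (hout : ∀ i ∉ R, ∃ e, 1 / (n : ℝ) ≤ v i e) : Prop1Goods n m v (cutAlloc m σ (shiftCuts c)) :=
  prop1Goods_cutAlloc h.injective (fun i hi => hout i (by rwa [← mem_coe, ← h.range_eq]))
    fun t => by
      rw [shiftCuts_succ]
      exact isProp1Bundle_itemIco_of_succ_left (h.cut_lt t) (by have := h.lt_succ t; omega)
        (le_shiftCuts h.zero t) (shiftCuts_le_succ t) (h.le_succ t)

/-- Every agent's two pieces together cover `c t, …, c (t + 1)`; the last agent's two pieces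
both contain everything after its first item, which is worth less than `τ`. -/
lemma le_utilW_add_utilW_shift (h : IsKnifeCut v τ X R 0 σ c) (hv : ∀ i e, 0 ≤ v i e)
    (hsmall : ∀ j ∈ R, ∀ e, v j e < τ) :
    s * τ + 2 * X - τ ≤
      utilW n m v (cutAlloc m σ c) + utilW n m v (cutAlloc m σ (shiftCuts c)) := by
  rw [utilW_cutAlloc v h.injective, utilW_cutAlloc v h.injective, ← sum_add_distrib,
    Fin.sum_univ_castSucc]
  have hpiece (t : Fin (s + 1)) : τ ≤ bundleVal (v (σ t)) (itemIco m (c t) (c ((t : ℕ) + 1))) +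
      bundleVal (v (σ t)) (itemIco m (shiftCuts c t) (shiftCuts c ((t : ℕ) + 1))) := by
    rw [shiftCuts_succ]
    refine (h.le_succ t).trans (le_of_eq_of_le ?_ (bundleVal_union_le (hv _) _ _))
    rw [itemIco_union_itemIco (le_shiftCuts h.zero t) (shiftCuts_le_of_lt (h.lt_succ t))
      (Nat.le_succ _)]
  have hlast : 2 * X - τ ≤ bundleVal (v (σ (Fin.last s))) (itemIco m (c s) (c (s + 1))) +
      bundleVal (v (σ (Fin.last s))) (itemIco m (shiftCuts c s) (shiftCuts c (s + 1))) := by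
    have hcs : c s < m := by simpa using h.cut_lt (Fin.last s)
    have hrest := bundleVal_itemIco_le_add (hv (σ (Fin.last s))) hcs
      (by simpa using h.lt_succ (Fin.last s)) (shiftCuts_le_succ s) (Nat.le_succ _)
    have hfirst := hsmall _ (h.mem (Fin.last s)) ⟨c s, hcs⟩
    have hX : X ≤ bundleVal (v (σ (Fin.last s))) (itemIco m (c s) (c (s + 1))) := by
      simpa [h.last] using h.le_last
    rw [shiftCuts_succ]
    linarith
  have := sum_le_sum fun t (_ : t ∈ univ) => hpiece (Fin.castSucc t)
  simp only [sum_const, card_univ, Fintype.card_fin, nsmul_eq_mul] at this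
  simp only [Fin.val_last, Fin.val_castSucc] at this ⊢
  linarith

lemma exists_prop1Goods_le_utilW (h : IsKnifeCut v (1 / n) X R 0 σ c) (hv : ∀ i e, 0 ≤ v i e)
    (hsmall : ∀ j ∈ R, ∀ e, v j e < 1 / n) (hout : ∀ i ∉ R, ∃ e, 1 / (n : ℝ) ≤ v i e) :
    ∃ A, ConnAlloc n m A ∧ Prop1Goods n m v A ∧ (s / n + 2 * X - 1 / n) / 2 ≤ utilW n m v A := by
  have hsum := h.le_utilW_add_utilW_shift hv hsmall
  rw [mul_one_div] at hsum
  rcases le_or_gt ((s / n + 2 * X - 1 / n) / 2) (utilW n m v (cutAlloc m σ c)) with hA | hA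
  · exact ⟨_, h.connAlloc, h.prop1Goods hout, hA⟩
  · exact ⟨_, h.connAlloc_shift, h.prop1Goods_shift hout, by linarith⟩

end IsKnifeCut

/-- For every fair-goods instance, there exists a connected PROP1
allocation with utilitarian welfare at least `1/2`. -/
theorem goods_utilitarian_prop1_exists (n m : ℕ) (hn : 1 ≤ n)
    (v : Fin n → Fin m → ℝ)
    (hpos : ∀ i j, 0 ≤ v i j)
    (hnorm : ∀ i, bundleVal (v i) Finset.univ = 1) :
    ∃ A : Fin n → Finset (Fin m), ConnAlloc n m A ∧ Prop1Goods n m v A ∧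
      (1 / 2 : ℝ) ≤ utilW n m v A := by
  have hn₀ : (0 : ℝ) < n := by exact_mod_cast hn
  have hm : 0 < m := Nat.pos_of_ne_zero fun hm => by
    subst hm
    simpa [bundleVal] using hnorm ⟨0, hn⟩
  have hall (i : Fin n) : bundleVal (v i) (itemIco m 0 m) = 1 := by
    rw [itemIco_zero_of_le le_rfl, hnorm]
  set H := univ.filter fun i => ∀ e, v i e < 1 / (n : ℝ)
  have hout : ∀ i ∉ H, ∃ e, 1 / (n : ℝ) ≤ v i e := by simp [H]
  have hsmall : ∀ j ∈ H, ∀ e, v j e < 1 / (n : ℝ) := fun j hj => (mem_filter.1 hj).2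
  rcases H.eq_empty_or_nonempty with hH | hH
  · obtain ⟨σ, c, h⟩ := exists_isKnifeCut_singleton (v := v) (w := ⟨0, hn⟩)
      ((div_le_one hn₀).2 (by exact_mod_cast hn : (1 : ℝ) ≤ n)) hm (hall _).ge
    refine ⟨_, h.connAlloc, h.prop1Goods fun i _ => hout i (by simp [hH]), ?_⟩
    linarith [h.le_utilW hpos]
  · obtain ⟨s, hs⟩ := Nat.exists_eq_add_one.2 (card_pos.2 hH)
    have hsn : (s : ℝ) + 1 ≤ n := by
      exact_mod_cast hs ▸ (card_le_univ H).trans_eq (Fintype.card_fin n)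
    have hX : 1 / (n : ℝ) ≤ 1 - s / n := by
      rw [le_sub_iff_add_le, ← add_div, div_le_one hn₀]
      linarith
    obtain ⟨σ, c, h⟩ := exists_isKnifeCut hpos hX s H 0 hs hm hsmall
      fun j _ => by rw [hall, mul_one_div, add_sub_cancel]
    obtain ⟨A, hA, hAprop, hAutil⟩ := h.exists_prop1Goods_le_utilW hpos hsmall hout
    exact ⟨A, hA, hAprop, le_trans (by linarith) hAutil⟩
end
end

section
/- Let n >= 4. Consider the fair-goods instance with n agents and n + 1 goods e_1, ..., e_{n+1} in which all agents have identical valuations: v_i(e_j) = 1/n^2 for 1 <= j <= n and v_i(e_{n+1}) = 1 - 1/n. Then OPT_E >= 1/n^2, but in every connected PROP1 allocation at least one agent receives an empty bundle, so every connected PROP1 allocation A has EW(A) = 0. Consequently the price of PROP1 with respect to egalitarian welfare for goods is infinite. -/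
open Finset

noncomputable section

/-!
Giving item `e_j` to agent `j` and also `e_{n+1}` to agent `n` makes every bundle worth at least
`1/n²`. Now suppose a PROP1 allocation gives every agent a nonempty bundle. Apart from
the holders of `e_n` and `e_{n+1}`, an agent's bundle consists of small items only; adding
`e_{n+1}` to it would break connectivity (`e_n` lies in between), so PROP1 forces at least
`n - 1` small items into it. These `n - 2 ≥ 2` agents then hold `(n - 2)(n - 1) > n + 1` items.
-/

section Welfare

variable {n m : ℕ}

lemma bundleVal_nonneg {v : Fin m → ℝ} (hv : ∀ e, 0 ≤ v e) (S : Finset (Fin m)) :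
    0 ≤ bundleVal v S :=
  sum_nonneg fun e _ => hv e

lemma bundleVal_le_sum_abs (v : Fin m → ℝ) (S : Finset (Fin m)) :
    bundleVal v S ≤ ∑ e, |v e| :=
  (sum_le_sum fun e _ => le_abs_self (v e)).trans
    (sum_le_sum_of_subset_of_nonneg (subset_univ S) fun e _ _ => abs_nonneg (v e))

lemma egalW_le (v : Fin n → Fin m → ℝ) (A : Fin n → Finset (Fin m)) (i : Fin n) :
    egalW n m v A ≤ bundleVal (v i) (A i) :=
  ciInf_le (Set.finite_range _).bddBelow i

lemma egalW_eq_zero_of_eq_empty {v : Fin n → Fin m → ℝ} (hv : ∀ i e, 0 ≤ v i e)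
    {A : Fin n → Finset (Fin m)} {i : Fin n} (hA : A i = ∅) : egalW n m v A = 0 := by
  have : Nonempty (Fin n) := ⟨i⟩
  refine le_antisymm ?_ (le_ciInf fun j => bundleVal_nonneg (hv j) (A j))
  simpa [hA, bundleVal] using egalW_le v A i

lemma egalW_le_optE [NeZero n] {v : Fin n → Fin m → ℝ} {A : Fin n → Finset (Fin m)}
    (hA : ConnAlloc n m A) : egalW n m v A ≤ optE n m v := by
  refine le_csSup ⟨∑ e, |v 0 e|, ?_⟩ ⟨A, hA, rfl⟩
  rintro _ ⟨B, -, rfl⟩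
  exact (egalW_le v B 0).trans (bundleVal_le_sum_abs _ _)

end Welfare

section Connectivity

variable {n m : ℕ}

lemma connAlloc_fibers {f : Fin m → Fin n} (hf : Monotone f) :
    ConnAlloc n m fun i => univ.filter (f · = i) := by
  refine ⟨fun i a ha c hc b hab hbc => ?_, fun i j hij => ?_, fun e => ⟨f e, by simp⟩⟩
  · simp only [mem_filter, mem_univ, true_and] at ha hc ⊢
    exact le_antisymm (hc ▸ hf hbc) (ha ▸ hf hab)
  · exact disjoint_filter.mpr fun e _ he => he ▸ hij

lemma sum_card_le_of_connAlloc {A : Fin n → Finset (Fin m)} (hA : ConnAlloc n m A)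
    (s : Finset (Fin n)) : ∑ i ∈ s, #(A i) ≤ m := by
  rw [← card_biUnion fun i _ j _ hij => hA.2.1 i j hij]
  exact (card_le_univ _).trans_eq (Fintype.card_fin m)

lemma IsConnBundle.mem_of_insert {S : Finset (Fin m)} {a b e : Fin m}
    (h : IsConnBundle (insert e S)) (ha : a ∈ S) (hab : a ≤ b) (hbe : b < e) : b ∈ S :=
  (mem_insert.mp (h a (mem_insert_of_mem ha) e (mem_insert_self e S) b hab hbe.le)).resolve_left
    hbe.ne

end Connectivity

def hardVal (n : ℕ) (j : Fin (n + 1)) : ℝ :=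
  if (j : ℕ) < n then 1 / (n : ℝ) ^ 2 else 1 - 1 / (n : ℝ)

section HardInstance

variable {n : ℕ}

lemma hardVal_nonneg (hn : 0 < n) (j : Fin (n + 1)) : 0 ≤ hardVal n j := by
  have : (1 : ℝ) ≤ n := by exact_mod_cast hn
  unfold hardVal
  split_ifs
  · positivity
  · exact sub_nonneg.mpr (div_le_one_of_le₀ this (by positivity))

lemma hardVal_of_ne_last {j : Fin (n + 1)} (hj : j ≠ Fin.last n) :
    hardVal n j = 1 / (n : ℝ) ^ 2 :=
  if_pos (Fin.val_lt_last hj)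

lemma bundleVal_hardVal_of_last_notMem {S : Finset (Fin (n + 1))} (hS : Fin.last n ∉ S) :
    bundleVal (hardVal n) S = #S / (n : ℝ) ^ 2 := by
  rw [bundleVal, sum_eq_card_nsmul fun j hj => hardVal_of_ne_last (ne_of_mem_of_not_mem hj hS),
    nsmul_eq_mul, mul_one_div]

lemma le_card_of_le_bundleVal_hardVal (hn : 0 < n) {S : Finset (Fin (n + 1))}
    (hS : Fin.last n ∉ S) (h : 1 / (n : ℝ) ≤ bundleVal (hardVal n) S) : n ≤ #S := by
  have hnR : (0 : ℝ) < n := by exact_mod_cast hn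
  rw [bundleVal_hardVal_of_last_notMem hS, div_le_div_iff₀ hnR (by positivity), one_mul, sq,
    mul_le_mul_iff_of_pos_right hnR] at h
  exact_mod_cast h

lemma one_div_sq_le_optE_hardVal (hn : 0 < n) :
    1 / (n : ℝ) ^ 2 ≤ optE n (n + 1) fun _ => hardVal n := by
  have : NeZero n := ⟨hn.ne'⟩
  let f : Fin (n + 1) → Fin n := fun e => ⟨min e (n - 1), by omega⟩
  have hf : Monotone f := fun a b hab => Fin.mk_le_mk.mpr (min_le_min_right _ hab)
  refine le_trans (le_ciInf fun i => ?_) (egalW_le_optE (connAlloc_fibers hf))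
  have hi : i.castSucc ∈ univ.filter (f · = i) := by simp [f, Fin.ext_iff]; omega
  calc 1 / (n : ℝ) ^ 2 = hardVal n i.castSucc := (hardVal_of_ne_last i.castSucc_ne_last).symm
    _ ≤ _ := single_le_sum (fun j _ => hardVal_nonneg hn j) hi

lemma sub_one_le_card_of_prop1 (hn : 0 < n) {S : Finset (Fin (n + 1))} (hS : S.Nonempty)
    (hlast : Fin.last n ∉ S) (hprev : (⟨n - 1, by omega⟩ : Fin (n + 1)) ∉ S)
    (hP : 1 / (n : ℝ) ≤ bundleVal (hardVal n) S ∨ ∃ e, e ∉ S ∧ IsConnBundle (insert e S) ∧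
      1 / (n : ℝ) ≤ bundleVal (hardVal n) (insert e S)) :
    n - 1 ≤ #S := by
  rcases hP with h | ⟨e, he, hconn, h⟩
  · have := le_card_of_le_bundleVal_hardVal hn hlast h
    omega
  obtain ⟨a, ha⟩ := hS
  have he_last : e ≠ Fin.last n := by
    rintro rfl
    refine hprev (hconn.mem_of_insert ha ?_ (Fin.mk_lt_mk.mpr (by omega)))
    have := Fin.val_lt_last (ne_of_mem_of_not_mem ha hlast)
    exact Fin.mk_le_mk.mpr (by omega)
  have := le_card_of_le_bundleVal_hardVal hn (by simp [he_last.symm, hlast]) h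
  rw [card_insert_of_notMem he] at this
  omega

lemma exists_eq_empty_of_prop1Goods_hardVal (hn : 4 ≤ n) {A : Fin n → Finset (Fin (n + 1))}
    (hA : ConnAlloc n (n + 1) A) (hP : Prop1Goods n (n + 1) (fun _ => hardVal n) A) :
    ∃ i, A i = ∅ := by
  by_contra! hne
  obtain ⟨k, hk⟩ := hA.2.2 (Fin.last n)
  obtain ⟨j, hj⟩ := hA.2.2 ⟨n - 1, by omega⟩
  have hnotMem {i i' : Fin n} {e : Fin (n + 1)} (hi : i ≠ i') (he : e ∈ A i') : e ∉ A i :=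
    fun h => disjoint_left.mp (hA.2.1 i i' hi) h he
  have hbig : ∀ i ∈ univ \ {j, k}, n - 1 ≤ #(A i) := fun i hi => by
    simp only [mem_sdiff, mem_univ, mem_insert, mem_singleton, not_or, true_and] at hi
    exact sub_one_le_card_of_prop1 (by omega) (hne i)
      (hnotMem hi.2 hk) (hnotMem hi.1 hj) (hP i)
  have hagents : n - 2 ≤ #(univ \ {j, k}) := by
    have := le_card_sdiff {j, k} (univ : Finset (Fin n))
    rw [card_univ, Fintype.card_fin] at this
    have := card_le_two (a := j) (b := k)
    omega
  have hcount : (n - 2) * (n - 1) ≤ n + 1 :=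
    calc (n - 2) * (n - 1) ≤ #(univ \ {j, k}) • (n - 1) := Nat.mul_le_mul_right _ hagents
      _ ≤ ∑ i ∈ univ \ {j, k}, #(A i) := card_nsmul_le_sum _ _ _ hbig
      _ ≤ n + 1 := sum_card_le_of_connAlloc hA _
  have : 2 * (n - 1) ≤ (n - 2) * (n - 1) := Nat.mul_le_mul_right _ (by omega)
  omega

end HardInstance

/-- The hard instance for Goods | Egalitarian | PROP1: with `n ≥ 4`
agents and `n + 1` goods, identical valuations `1/n²` on the first `n` items and
`1 - 1/n` on the last item, `OPT_E ≥ 1/n²`, but every connected PROP1 allocation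
leaves some agent empty-handed and hence has egalitarian welfare `0`. -/
theorem goods_egalitarian_prop1_infinite (n : ℕ) (hn : 4 ≤ n)
    (v : Fin n → Fin (n + 1) → ℝ)
    (hv : ∀ i : Fin n, ∀ j : Fin (n + 1),
      v i j = if (j : ℕ) < n then 1 / (n : ℝ) ^ 2 else 1 - 1 / (n : ℝ)) :
    1 / (n : ℝ) ^ 2 ≤ optE n (n + 1) v ∧
    ∀ A : Fin n → Finset (Fin (n + 1)), ConnAlloc n (n + 1) A →
      Prop1Goods n (n + 1) v A →
      (∃ i, A i = ∅) ∧ egalW n (n + 1) v A = 0 := by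
  obtain rfl : v = fun _ => hardVal n := funext fun i => funext (hv i)
  refine ⟨one_div_sq_le_optE_hardVal (by omega), fun A hA hP => ?_⟩
  obtain ⟨i, hi⟩ := exists_eq_empty_of_prop1Goods_hardVal hn hA hP
  exact ⟨⟨i, hi⟩, egalW_eq_zero_of_eq_empty (fun _ => hardVal_nonneg (by omega)) hi⟩
end
end
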